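/- arXiv:1108.3988 — 6 statements merged into one kernel-verified Lean document; each statement's English description precedes it below -/
import Mathlib

section
/- Under the multiplicative drift condition Q(e^V) ≤ e^{V(1−δ) + b_d·1_{C_d}}, for any r ≥ d̲ the restriction bound 1_{C_r^c}·Q(e^V) ≤ e^{V − δr} holds, and consequently the truncated operator Q̂^{(r)} := 1_{C_r}·Q satisfies the operator norm bound |||Q − Q̂^{(r)}|||_v ≤ e^{−δr}. -/
open MeasureTheory
open scoped ENNReal

/-!
Off the small set `C_r = {V ≤ r}` the indicator in the drift condition vanishes, so
`Q(e^V) ≤ e^{V - δV} ≤ e^{V - δr}` there. Any `φ ≤ e^V` is then dominated by monotonicity of the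
integral, which is the operator-norm bound for `Q - 1_{C_r} Q = 1_{C_rᶜ} Q`.
-/

lemma mul_one_sub_le_sub_mul {v δ r : ℝ} (hδ : 0 ≤ δ) (hr : r ≤ v) : v * (1 - δ) ≤ v - δ * r := by
  nlinarith

lemma ENNReal.ofReal_exp_sub (a b : ℝ) :
    ENNReal.ofReal (Real.exp (a - b)) = ENNReal.ofReal (Real.exp (-b)) * ENNReal.ofReal (Real.exp a) := by
  rw [← ENNReal.ofReal_mul (Real.exp_nonneg _), ← Real.exp_add, neg_add_eq_sub]

section

variable {X : Type*} [MeasurableSpace X] {Q : X → Measure X}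

theorem lintegral_exp_le_of_drift_of_lt {V : X → ℝ} {δ r c : ℝ} (hδ : 0 ≤ δ) {x : X}
    (hx : r < V x)
    (hdrift : ∫⁻ y, ENNReal.ofReal (Real.exp (V y)) ∂(Q x)
      ≤ ENNReal.ofReal (Real.exp (V x * (1 - δ) + c * {z | V z ≤ r}.indicator (fun _ => (1 : ℝ)) x))) :
    ∫⁻ y, ENNReal.ofReal (Real.exp (V y)) ∂(Q x) ≤ ENNReal.ofReal (Real.exp (V x - δ * r)) := by
  rw [Set.indicator_of_notMem (s := {z | V z ≤ r}) (not_le.2 hx), mul_zero, add_zero] at hdrift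
  exact hdrift.trans (ENNReal.ofReal_le_ofReal (Real.exp_le_exp.2 (mul_one_sub_le_sub_mul hδ hx.le)))

theorem indicator_compl_lintegral_le {w φ : X → ℝ≥0∞} {C : Set X} {ε : ℝ≥0∞}
    (hw : ∀ x ∉ C, ∫⁻ y, w y ∂(Q x) ≤ ε * w x) (hφ : φ ≤ w) (x : X) :
    Cᶜ.indicator (fun x' => ∫⁻ y, φ y ∂(Q x')) x ≤ ε * w x := by
  by_cases hx : x ∈ C
  · simp [hx]
  · rw [Set.indicator_of_mem hx]
    exact (lintegral_mono hφ).trans (hw x hx)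

end

theorem truncation_bound_of_mult_drift_general
    {X : Type*} [MeasurableSpace X] (Q : X → Measure X)
    (V : X → ℝ)
    (δ : ℝ) (hδ : δ ∈ Set.Ioo (0 : ℝ) 1) (dlow : ℝ)
    (b : ℝ → ℝ)
    (hdrift : ∀ d, dlow ≤ d → ∀ x,
      ∫⁻ y, ENNReal.ofReal (Real.exp (V y)) ∂(Q x)
        ≤ ENNReal.ofReal (Real.exp (V x * (1 - δ)
            + b d * Set.indicator {z | V z ≤ d} (fun _ => (1 : ℝ)) x)))
    (r : ℝ) (hr : dlow ≤ r) :
    (∀ x, r < V x →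
      ∫⁻ y, ENNReal.ofReal (Real.exp (V y)) ∂(Q x)
        ≤ ENNReal.ofReal (Real.exp (V x - δ * r)))
    ∧ (∀ φ : X → ℝ≥0∞, (∀ y, φ y ≤ ENNReal.ofReal (Real.exp (V y))) → ∀ x,
        Set.indicator {z | V z ≤ r}ᶜ (fun x' => ∫⁻ y, φ y ∂(Q x')) x
          ≤ ENNReal.ofReal (Real.exp (-(δ * r))) * ENNReal.ofReal (Real.exp (V x))) := by
  have hoff : ∀ x, r < V x → ∫⁻ y, ENNReal.ofReal (Real.exp (V y)) ∂(Q x)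
      ≤ ENNReal.ofReal (Real.exp (V x - δ * r)) :=
    fun x hx => lintegral_exp_le_of_drift_of_lt hδ.1.le hx (hdrift r hr x)
  refine ⟨hoff, fun φ hφ => indicator_compl_lintegral_le (fun x hx => ?_) hφ⟩
  rw [← ENNReal.ofReal_exp_sub]
  exact hoff x (not_le.1 hx)

/-- Under the multiplicative drift condition `Q(e^V) ≤ e^{V(1−δ) + b_d·1_{C_d}}` (for all
`d ≥ d̲`), for any `r ≥ d̲` the restriction bound `1_{C_r^c}·Q(e^V) ≤ e^{V − δr}` holds,
and consequently the truncated operator `Q̂^{(r)} = 1_{C_r}·Q` satisfies the operator-norm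
bound `|||Q − Q̂^{(r)}|||_v ≤ e^{−δr}`, i.e. for every `φ` with `|φ| ≤ v = e^V`,
`1_{C_r^c}(x)·Q(φ)(x) ≤ e^{−δr}·v(x)` for all `x`. -/
theorem truncation_bound_of_mult_drift
    {X : Type*} [MeasurableSpace X] (Q : X → Measure X)
    (V : X → ℝ) (hV1 : ∀ x, 1 ≤ V x) (hVunb : ∀ r : ℝ, ∃ x, r < V x)
    (δ : ℝ) (hδ : δ ∈ Set.Ioo (0 : ℝ) 1) (dlow : ℝ) (hdlow : 1 ≤ dlow)
    (b : ℝ → ℝ)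
    (hdrift : ∀ d, dlow ≤ d → ∀ x,
      ∫⁻ y, ENNReal.ofReal (Real.exp (V y)) ∂(Q x)
        ≤ ENNReal.ofReal (Real.exp (V x * (1 - δ)
            + b d * Set.indicator {z | V z ≤ d} (fun _ => (1 : ℝ)) x)))
    (r : ℝ) (hr : dlow ≤ r) :
    (∀ x, r < V x →
      ∫⁻ y, ENNReal.ofReal (Real.exp (V y)) ∂(Q x)
        ≤ ENNReal.ofReal (Real.exp (V x - δ * r)))
    ∧ (∀ φ : X → ℝ≥0∞, (∀ y, φ y ≤ ENNReal.ofReal (Real.exp (V y))) → ∀ x,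
        Set.indicator {z | V z ≤ r}ᶜ (fun x' => ∫⁻ y, φ y ∂(Q x')) x
          ≤ ENNReal.ofReal (Real.exp (-(δ * r))) * ENNReal.ofReal (Real.exp (V x))) :=
  truncation_bound_of_mult_drift_general Q V δ hδ dlow b hdrift r hr
end

section
/- Under the drift conditions (i) sup_{n≥0} P̌_n(v*) ≤ c_1·v* and (ii) v·P̌_n(v*) ≤ c·v* for all n ≥ 1, for any n ≥ 1, 1 ≤ s ≤ n+1 and coalescent time configuration 0 ≤ i_1 < ... < i_s ≤ n, the expectation of the product Ě_x[ ∏_{k ∈ {i_1,...,i_s}} v(X̌_k) · v*(X̌_{n+1}) ] is bounded by c^{s+1}·v*(x) for all x. -/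
/-!
Peel off the coalescent times from the left. If `i < j` are consecutive times, integrating
`v(X̌_j) ⋯ v*(X̌_{n+1})` over the chain started at time `i` costs, by induction, a factor
`c^{#remaining times}` times `P̌_{j-i}(v*)`, and the weight `v(X̌_i)` in front of it is
absorbed by condition (ii) since `j - i ≥ 1`, at the price of one more factor `c`. At the first
time `i_1` there is no weight in front, and condition (i) absorbs `P̌_{i_1}(v*)` even when
`i_1 = 0`.
-/

open MeasureTheory
open scoped ENNReal

/-- The action of a kernel on nonnegative functions. -/
noncomputable def kernelOp {X : Type*} [MeasurableSpace X] (P : X → Measure X)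
    (f : X → ℝ≥0∞) : X → ℝ≥0∞ :=
  fun x => ∫⁻ y, f y ∂(P x)

/-- For a Markov chain with kernel `P` started at time `t`, `chainProdExp P v vstar nfin t l x`
is the expectation `Ě_x[∏_{k∈l} v(X̌_{k−t}) · v*(X̌_{nfin−t})]` written via iterated
kernel operators, where `l` is the (strictly increasing) list of coalescent times. -/
noncomputable def chainProdExp {X : Type*} [MeasurableSpace X] (P : X → Measure X)
    (v vstar : X → ℝ≥0∞) (nfin : ℕ) : ℕ → List ℕ → X → ℝ≥0∞
  | t, [] => (kernelOp P)^[nfin - t] vstar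
  | t, k :: ks => (kernelOp P)^[k - t] (fun x => v x * chainProdExp P v vstar nfin k ks x)

section

variable {X : Type*} [MeasurableSpace X] (P : X → Measure X)

lemma kernelOp_le_const_mul {f g : X → ℝ≥0∞} {r : ℝ≥0∞} (hr : r ≠ ∞)
    (h : ∀ x, f x ≤ r * g x) (x : X) : kernelOp P f x ≤ r * kernelOp P g x :=
  calc ∫⁻ y, f y ∂P x ≤ ∫⁻ y, r * g y ∂P x := lintegral_mono h
    _ = r * ∫⁻ y, g y ∂P x := lintegral_const_mul' r g hr

lemma kernelOp_iterate_le_const_mul {f g : X → ℝ≥0∞} {r : ℝ≥0∞} (hr : r ≠ ∞)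
    (h : ∀ x, f x ≤ r * g x) (m : ℕ) :
    ∀ x, (kernelOp P)^[m] f x ≤ r * (kernelOp P)^[m] g x := by
  induction m with
  | zero => exact h
  | succ m ih => simpa only [Function.iterate_succ_apply'] using kernelOp_le_const_mul P hr ih

variable {v vstar : X → ℝ≥0∞} {nfin : ℕ}

lemma chainProdExp_cons_le {C : ℝ≥0∞} (hC : C ≠ ∞) {t k : ℕ} {ks : List ℕ}
    (h : ∀ y, v y * chainProdExp P v vstar nfin k ks y ≤ C * vstar y) (x : X) :
    chainProdExp P v vstar nfin t (k :: ks) x ≤ C * (kernelOp P)^[k - t] vstar x :=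
  kernelOp_iterate_le_const_mul P hC h (k - t) x

lemma mul_chainProdExp_le {c : ℝ≥0∞} (hc : c ≠ ∞)
    (hmult : ∀ n : ℕ, 1 ≤ n → ∀ x : X, v x * (kernelOp P)^[n] vstar x ≤ c * vstar x)
    {t : ℕ} {l : List ℕ} (hl : (t :: (l ++ [nfin])).IsChain (· < ·)) (x : X) :
    v x * chainProdExp P v vstar nfin t l x ≤ c ^ (l.length + 1) * vstar x := by
  induction l generalizing t x with
  | nil =>
    have htn : t < nfin := List.isChain_pair.mp hl
    simpa [chainProdExp] using hmult (nfin - t) (by omega) x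
  | cons k ks ih =>
    obtain ⟨htk, hks⟩ := List.isChain_cons_cons.mp hl
    calc v x * chainProdExp P v vstar nfin t (k :: ks) x
        ≤ v x * (c ^ (ks.length + 1) * (kernelOp P)^[k - t] vstar x) :=
          mul_le_mul_right (chainProdExp_cons_le P (ENNReal.pow_ne_top hc) (ih hks) x) _
      _ = c ^ (ks.length + 1) * (v x * (kernelOp P)^[k - t] vstar x) := by ring
      _ ≤ c ^ (ks.length + 1) * (c * vstar x) :=
          mul_le_mul_right (hmult (k - t) (by omega) x) _
      _ = c ^ ((k :: ks).length + 1) * vstar x := by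
          rw [List.length_cons, pow_succ _ (ks.length + 1)]
          ring

end

theorem chain_product_expectation_bound_general
    {X : Type*} [MeasurableSpace X] (P : X → Measure X)
    (v vstar : X → ℝ≥0∞)
    (c : ℝ≥0∞) (hc : c < ⊤)
    (hiter : ∀ (n : ℕ) (x : X), (kernelOp P)^[n] vstar x ≤ c * vstar x)
    (hmult : ∀ n : ℕ, 1 ≤ n → ∀ x : X, v x * (kernelOp P)^[n] vstar x ≤ c * vstar x) :
    ∀ n : ℕ, 1 ≤ n → ∀ l : List ℕ, l ≠ [] → l.length ≤ n + 1 →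
      l.Chain' (· < ·) → (∀ k ∈ l, k ≤ n) → ∀ x,
        chainProdExp P v vstar (n + 1) 0 l x ≤ c ^ (l.length + 1) * vstar x := by
  intro n _ l hne _ hchain hle x
  obtain ⟨k, ks, rfl⟩ := List.exists_cons_of_ne_nil hne
  have hchain_end : (k :: (ks ++ [n + 1])).IsChain (· < ·) := by
    rw [← List.cons_append]
    refine hchain.append (List.isChain_singleton _) fun i hi j hj => ?_
    rw [List.head?_singleton, Option.mem_some_iff] at hj
    have := hle i (List.mem_of_getLast? hi)
    omega
  calc chainProdExp P v vstar (n + 1) 0 (k :: ks) x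
      ≤ c ^ (ks.length + 1) * (kernelOp P)^[k - 0] vstar x :=
        chainProdExp_cons_le P (ENNReal.pow_ne_top hc.ne)
          (mul_chainProdExp_le P hc.ne hmult hchain_end) x
    _ ≤ c ^ (ks.length + 1) * (c * vstar x) := mul_le_mul_right (hiter k x) _
    _ = c ^ ((k :: ks).length + 1) * vstar x := by
        rw [List.length_cons, pow_succ _ (ks.length + 1)]
        ring

/-- Under the drift conditions (i) `sup_{n≥0} P̌_n(v*) ≤ c·v*` and
(ii) `v·P̌_n(v*) ≤ c·v*` for all `n ≥ 1`, for any `n ≥ 1`, `1 ≤ s ≤ n+1` and coalescent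
time configuration `0 ≤ i_1 < ... < i_s ≤ n`, the expectation
`Ě_x[∏_{k∈{i_1,...,i_s}} v(X̌_k)·v*(X̌_{n+1})]` is bounded by `c^{s+1}·v*(x)` for all `x`. -/
theorem chain_product_expectation_bound
    {X : Type*} [MeasurableSpace X] (P : X → Measure X)
    (hP : ∀ x, IsProbabilityMeasure (P x))
    (v vstar : X → ℝ≥0∞) (hv1 : ∀ x, 1 ≤ v x) (hvv : ∀ x, v x ≤ vstar x)
    (c : ℝ≥0∞) (hc : c < ⊤)
    (hiter : ∀ (n : ℕ) (x : X), (kernelOp P)^[n] vstar x ≤ c * vstar x)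
    (hmult : ∀ n : ℕ, 1 ≤ n → ∀ x : X, v x * (kernelOp P)^[n] vstar x ≤ c * vstar x) :
    ∀ n : ℕ, 1 ≤ n → ∀ l : List ℕ, l ≠ [] → l.length ≤ n + 1 →
      l.Chain' (· < ·) → (∀ k ∈ l, k ≤ n) → ∀ x,
        chainProdExp P v vstar (n + 1) 0 l x ≤ c ^ (l.length + 1) * vstar x :=
  chain_product_expectation_bound_general P v vstar c hc hiter hmult
end

section
/- Let Q(x,dy) = e^{U(x)}·M(x,dy) with U(x) = −x² and M the standard Gaussian random walk kernel on ℝ. Then there exist δ_0 > 0, δ ∈ (0,1), and for each sufficiently large d a constant b_d < ∞ such that with V(x) = x²/(2(1+δ_0)) + 1, the multiplicative drift condition Q(e^V)(x) ≤ exp(V(x)(1−δ) + b_d·1_{C_d}(x)) holds for all x ∈ ℝ, where C_d = {x : V(x) ≤ d}. -/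
/-! Completing the square makes `Q(e^V)` an explicit Gaussian integral: for `δ₀ = 1`,
`Q(e^V)(x) = √2 · e^{1 - x²/2} ≤ e^{3/2 - x²/2}`. This is at most `e^{V(x)/2}` once `x² ≥ 8/5`,
in particular outside `C_d` for `d ≥ 2`, and at most `e^{V(x)/2 + 1}` everywhere. -/

open MeasureTheory Real

theorem integral_exp_mul_sq_mul_gaussian {a : ℝ} (ha : a < 1 / 2) (x : ℝ) :
    ∫ y : ℝ, exp (a * y ^ 2) * ((√(2 * π))⁻¹ * exp (-((y - x) ^ 2) / 2))
      = (√(1 - 2 * a))⁻¹ * exp (a * x ^ 2 / (1 - 2 * a)) := by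
  set c := 1 - 2 * a
  have hc : 0 < c := by linarith
  have hcomplete_square : ∀ y : ℝ, exp (a * y ^ 2) * ((√(2 * π))⁻¹ * exp (-((y - x) ^ 2) / 2))
      = (√(2 * π))⁻¹ * exp (a * x ^ 2 / c) * exp (-(c / 2) * (y - x / c) ^ 2) := by
    intro y
    rw [mul_left_comm, mul_assoc, ← exp_add, ← exp_add]
    congr 2
    field_simp
    ring
  simp_rw [hcomplete_square]
  rw [integral_const_mul, integral_sub_right_eq_self (fun y ↦ exp (-(c / 2) * y ^ 2)),
    integral_gaussian, div_div_eq_mul_div, mul_comm π 2, sqrt_div' _ hc.le]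
  field_simp

theorem sqrt_two_le_exp_half : √2 ≤ exp (1 / 2) := by
  rw [exp_half]
  exact sqrt_le_sqrt (by linarith [add_one_le_exp 1])

theorem exp_neg_sq_mul_integral_exp_quarter_sq_add_one_mul_gaussian (x : ℝ) :
    exp (-(x ^ 2)) * ∫ y : ℝ, exp (y ^ 2 / (2 * (1 + 1)) + 1) *
        ((√(2 * π))⁻¹ * exp (-((y - x) ^ 2) / 2)) = √2 * exp (1 - x ^ 2 / 2) := by
  have hV : ∀ y : ℝ, exp (y ^ 2 / (2 * (1 + 1)) + 1) = exp 1 * exp (1 / 4 * y ^ 2) := by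
    intro y
    rw [← exp_add]
    ring_nf
  simp_rw [hV, mul_assoc, integral_const_mul]
  rw [integral_exp_mul_sq_mul_gaussian (by norm_num), show (1 : ℝ) - 2 * (1 / 4) = 2⁻¹ by norm_num, sqrt_inv, inv_inv, mul_left_comm,
    ← mul_assoc, ← mul_assoc, ← exp_add, mul_comm _ √2, mul_assoc, ← exp_add]
  ring_nf

/-- Let `Q(x,dy) = e^{U(x)}·M(x,dy)` with `U(x) = −x²` and `M` the standard Gaussian
random walk kernel on `ℝ`. Then there exist `δ_0 > 0`, `δ ∈ (0,1)`, and for each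
sufficiently large `d` a constant `b_d < ∞` such that, with
`V(x) = x²/(2(1+δ_0)) + 1`, the multiplicative drift condition
`Q(e^V)(x) ≤ exp(V(x)(1−δ) + b_d·1_{C_d}(x))` holds for all `x ∈ ℝ`,
where `C_d = {x : V(x) ≤ d}`. -/
theorem gaussian_random_walk_mult_drift :
    ∃ δ0 : ℝ, 0 < δ0 ∧ ∃ δ : ℝ, 0 < δ ∧ δ < 1 ∧ ∃ D : ℝ, ∀ d : ℝ, D ≤ d → ∃ b : ℝ,
      ∀ x : ℝ,
        Real.exp (-(x ^ 2)) *
            ∫ y : ℝ, Real.exp (y ^ 2 / (2 * (1 + δ0)) + 1) *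
              ((Real.sqrt (2 * Real.pi))⁻¹ * Real.exp (-((y - x) ^ 2) / 2))
          ≤ Real.exp ((x ^ 2 / (2 * (1 + δ0)) + 1) * (1 - δ)
              + b * Set.indicator {z : ℝ | z ^ 2 / (2 * (1 + δ0)) + 1 ≤ d}
                  (fun _ => (1 : ℝ)) x) := by
  refine ⟨1, one_pos, 1 / 2, by norm_num, by norm_num, 2, fun d hd ↦ ⟨1, fun x ↦ ?_⟩⟩
  calc exp (-(x ^ 2)) * ∫ y : ℝ, exp (y ^ 2 / (2 * (1 + 1)) + 1) *
        ((√(2 * π))⁻¹ * exp (-((y - x) ^ 2) / 2))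
      = √2 * exp (1 - x ^ 2 / 2) :=
        exp_neg_sq_mul_integral_exp_quarter_sq_add_one_mul_gaussian x
    _ ≤ exp (1 / 2) * exp (1 - x ^ 2 / 2) := by gcongr; exact sqrt_two_le_exp_half
    _ = exp (3 / 2 - x ^ 2 / 2) := by rw [← exp_add]; ring_nf
    _ ≤ _ := by
      rw [exp_le_exp]
      by_cases hx : x ∈ {z : ℝ | z ^ 2 / (2 * (1 + 1)) + 1 ≤ d}
      · rw [Set.indicator_of_mem hx]
        linarith [sq_nonneg x]
      · rw [Set.indicator_of_notMem hx]
        rw [Set.mem_ofPred_eq, not_le] at hx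
        linarith
end

section
/- Suppose M satisfies the multiplicative drift M(e^V) ≤ e^{V(1−δ_1)+b_d·1_{C_d}} for all d ≥ d_1, and U: X → ℝ satisfies U⁺ ∈ L_V with ‖1_{C_r^c}·U⁺‖_V → 0 as r → ∞. Then for any δ ∈ (0, δ_1) there exists d̲ such that for all d ≥ d̲, the kernel Q(x,dy) := e^{U(x)} M(x,dy) satisfies Q(e^V) ≤ e^{V(1−δ) + b̄_d·1_{C_d}} with b̄_d = b_d + d·‖U⁺‖_V. -/
/-!
Tilting by `e^U` adds `U(x)` to the exponent of the drift bound. Off the sublevel set `C_d`,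
once `d` exceeds the radius beyond which `U⁺ ≤ (δ₁ - δ) V`, this is absorbed by giving up
part of the contraction rate `δ₁`; on `C_d` we have `U ≤ ‖U⁺‖_V V ≤ d ‖U⁺‖_V`, which is
absorbed into the constant.
-/

open MeasureTheory
open scoped ENNReal

lemma ofReal_exp_mul_le_of_le_ofReal_exp {a b c : ℝ} {m : ℝ≥0∞}
    (hm : m ≤ ENNReal.ofReal (Real.exp b)) (habc : a + b ≤ c) :
    ENNReal.ofReal (Real.exp a) * m ≤ ENNReal.ofReal (Real.exp c) :=
  calc ENNReal.ofReal (Real.exp a) * m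
      ≤ ENNReal.ofReal (Real.exp a) * ENNReal.ofReal (Real.exp b) := mul_le_mul_right hm _
    _ = ENNReal.ofReal (Real.exp (a + b)) := by
        rw [← ENNReal.ofReal_mul (Real.exp_nonneg _), ← Real.exp_add]
    _ ≤ ENNReal.ofReal (Real.exp c) := ENNReal.ofReal_le_ofReal (Real.exp_le_exp.2 habc)

lemma add_drift_exponent_le {u v δ δ₁ n r d c : ℝ} (hv : 0 < v) (hδ : δ ≤ δ₁)
    (hn : max u 0 ≤ n * v) (hr : r < v → max u 0 ≤ (δ₁ - δ) * v) (hrd : r ≤ d) :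
    u + (v * (1 - δ₁) + c * (if v ≤ d then 1 else 0))
      ≤ v * (1 - δ) + (c + d * n) * (if v ≤ d then 1 else 0) := by
  have hu : u ≤ max u 0 := le_max_left u 0
  split_ifs with hvd
  · have hn0 : 0 ≤ n := nonneg_of_mul_nonneg_left ((le_max_right u 0).trans hn) hv
    nlinarith [mul_le_mul_of_nonneg_left hvd hn0]
  · nlinarith [hr (hrd.trans_lt (not_le.1 hvd))]

theorem mult_drift_transfer_to_Q_general
    {X : Type*} [MeasurableSpace X] (M : X → Measure X)
    (V : X → ℝ) (hV1 : ∀ x, 1 ≤ V x)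
    (δ1 : ℝ) (d1 : ℝ) (b : ℝ → ℝ)
    (hdrift : ∀ d, d1 ≤ d → ∀ x,
      ∫⁻ y, ENNReal.ofReal (Real.exp (V y)) ∂(M x)
        ≤ ENNReal.ofReal (Real.exp (V x * (1 - δ1)
            + b d * Set.indicator {z | V z ≤ d} (fun _ => (1 : ℝ)) x)))
    (U : X → ℝ) (nU : ℝ) (hnU : ∀ x, max (U x) 0 ≤ nU * V x)
    (hlim : ∀ ε : ℝ, 0 < ε → ∃ r : ℝ, ∀ x, r < V x → max (U x) 0 ≤ ε * V x)
    (δ : ℝ) (hδlt : δ < δ1) :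
    ∃ dlow : ℝ, d1 ≤ dlow ∧ ∀ d, dlow ≤ d → ∀ x,
      ENNReal.ofReal (Real.exp (U x)) * ∫⁻ y, ENNReal.ofReal (Real.exp (V y)) ∂(M x)
        ≤ ENNReal.ofReal (Real.exp (V x * (1 - δ)
            + (b d + d * nU) * Set.indicator {z | V z ≤ d} (fun _ => (1 : ℝ)) x)) := by
  obtain ⟨r, hr⟩ := hlim (δ1 - δ) (sub_pos.2 hδlt)
  refine ⟨max d1 r, le_max_left _ _, fun d hd x => ?_⟩
  refine ofReal_exp_mul_le_of_le_ofReal_exp (hdrift d (le_of_max_le_left hd) x) ?_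
  simp only [Set.indicator_apply, Set.mem_ofPred_eq]
  exact add_drift_exponent_le (zero_lt_one.trans_le (hV1 x)) hδlt.le (hnU x) (hr x)
    (le_of_max_le_right hd)

/-- Suppose `M` satisfies the multiplicative drift `M(e^V) ≤ e^{V(1−δ_1)+b_d·1_{C_d}}`
for all `d ≥ d_1`, and `U : X → ℝ` satisfies `U⁺ ∈ L_V` (with `‖U⁺‖_V ≤ nU`) and
`‖1_{C_r^c}·U⁺‖_V → 0` as `r → ∞`. Then for any `δ ∈ (0,δ_1)` there exists `d̲` such
that for all `d ≥ d̲` the kernel `Q(x,dy) = e^{U(x)}M(x,dy)` satisfies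
`Q(e^V) ≤ e^{V(1−δ) + b̄_d·1_{C_d}}` with `b̄_d = b_d + d·‖U⁺‖_V`. -/
theorem mult_drift_transfer_to_Q
    {X : Type*} [MeasurableSpace X] (M : X → Measure X)
    (V : X → ℝ) (hV1 : ∀ x, 1 ≤ V x) (hVunb : ∀ r : ℝ, ∃ x, r < V x)
    (δ1 : ℝ) (hδ1 : 0 < δ1) (d1 : ℝ) (hd1 : 1 ≤ d1) (b : ℝ → ℝ)
    (hdrift : ∀ d, d1 ≤ d → ∀ x,
      ∫⁻ y, ENNReal.ofReal (Real.exp (V y)) ∂(M x)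
        ≤ ENNReal.ofReal (Real.exp (V x * (1 - δ1)
            + b d * Set.indicator {z | V z ≤ d} (fun _ => (1 : ℝ)) x)))
    (U : X → ℝ) (nU : ℝ) (hnU : ∀ x, max (U x) 0 ≤ nU * V x)
    (hlim : ∀ ε : ℝ, 0 < ε → ∃ r : ℝ, ∀ x, r < V x → max (U x) 0 ≤ ε * V x)
    (δ : ℝ) (hδpos : 0 < δ) (hδlt : δ < δ1) :
    ∃ dlow : ℝ, d1 ≤ dlow ∧ ∀ d, dlow ≤ d → ∀ x,
      ENNReal.ofReal (Real.exp (U x)) * ∫⁻ y, ENNReal.ofReal (Real.exp (V y)) ∂(M x)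
        ≤ ENNReal.ofReal (Real.exp (V x * (1 - δ)
            + (b d + d * nU) * Set.indicator {z | V z ≤ d} (fun _ => (1 : ℝ)) x)) :=
  mult_drift_transfer_to_Q_general M V hV1 δ1 d1 b hdrift U nU hnU hlim δ hδlt
end

section
/- Suppose |||M|||_v < ∞ and U satisfies: U bounded below on each C_d; U bounded above on C_{d_1}; and U(x)/V(x) ≤ −δ_1 for x outside C_{d_1}, for some δ_1 ∈ (0,1). Then for any δ ∈ (0,δ_1) there exists d̲ such that for all d ≥ d̲ the kernel Q = e^U·M satisfies: 1_{C_d^c}·Q(e^V) ≤ e^{V(1−δ)} and 1_{C_d}·Q(e^V) ≤ exp(d + sup_{y ∈ C_d} U(y) + log|||M|||_v); hence Q satisfies a multiplicative drift condition Q(e^V) ≤ e^{V(1−δ)+b_d·1_{C_d}} with b_d = d + sup_{C_d} U + log|||M|||_v. -/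
/-!
Since `M (e^V) ≤ nM e^V`, we have `Q (e^V) ≤ exp (U + log nM + V)`. Outside `C_d` with
`d ≥ max d₁ (log nM / (δ₁ - δ))`, the decay `U ≤ -δ₁ V` absorbs `log nM ≤ (δ₁ - δ) V`,
leaving `V (1 - δ)`. Inside `C_d` it suffices that `V ≤ d` and `U ≤ sup_{C_d} U`, the supremum
being finite because `U` is bounded above on `C_{d₁}` and nonpositive off it.
-/

open MeasureTheory Real Set
open scoped ENNReal

lemma ofReal_exp_mul_le_of_add_log_add_le {a : ℝ≥0∞} {n u v w : ℝ} (hn : 0 < n)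
    (ha : a ≤ ENNReal.ofReal (n * exp v)) (h : u + log n + v ≤ w) :
    ENNReal.ofReal (exp u) * a ≤ ENNReal.ofReal (exp w) :=
  calc ENNReal.ofReal (exp u) * a ≤ ENNReal.ofReal (exp u) * ENNReal.ofReal (n * exp v) := by
        gcongr
    _ = ENNReal.ofReal (exp (u + log n + v)) := by
        rw [← ENNReal.ofReal_mul (exp_pos u).le, exp_add, exp_add, exp_log hn, mul_assoc]
    _ ≤ ENNReal.ofReal (exp w) := by gcongr

lemma add_log_add_le_mul_one_sub {n u v d δ δ₁ : ℝ} (hδ : δ < δ₁)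
    (hd : log n / (δ₁ - δ) ≤ d) (hv : d ≤ v) (hu : u ≤ -δ₁ * v) :
    u + log n + v ≤ v * (1 - δ) := by
  have hlog : log n ≤ (δ₁ - δ) * v := by
    rw [div_le_iff₀ (sub_pos.mpr hδ)] at hd
    nlinarith
  linarith

lemma bddAbove_range_of_bddAbove_sublevel {X : Type*} {U V : X → ℝ} {d : ℝ}
    (hU : BddAbove (U '' {x | V x ≤ d})) (hUneg : ∀ x, d < V x → U x ≤ 0) :
    BddAbove (range U) := by
  obtain ⟨b, hb⟩ := hU
  refine ⟨max b 0, ?_⟩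
  rintro _ ⟨x, rfl⟩
  by_cases hx : V x ≤ d
  · exact le_max_of_le_left (hb ⟨x, hx, rfl⟩)
  · exact le_max_of_le_right (hUneg x (not_le.mp hx))

lemma le_ofReal_exp_add_mul_indicator {X : Type*} {q : ℝ≥0∞} {s : Set X} {x : X} {a b : ℝ}
    (ha : 0 ≤ a) (hin : x ∈ s → q ≤ ENNReal.ofReal (exp b))
    (hout : x ∉ s → q ≤ ENNReal.ofReal (exp a)) :
    q ≤ ENNReal.ofReal (exp (a + b * s.indicator (fun _ => (1 : ℝ)) x)) := by
  by_cases hx : x ∈ s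
  · refine (hin hx).trans ?_
    rw [indicator_of_mem hx, mul_one]
    gcongr
    linarith
  · simpa [indicator_of_notMem hx] using hout hx

theorem mult_drift_from_decaying_potential_general
    {X : Type*} [MeasurableSpace X] (M : X → Measure X)
    (V : X → ℝ) (hV1 : ∀ x, 1 ≤ V x)
    (nM : ℝ) (hnM : 1 ≤ nM)
    (hMv : ∀ x, ∫⁻ y, ENNReal.ofReal (Real.exp (V y)) ∂(M x)
      ≤ ENNReal.ofReal (nM * Real.exp (V x)))
    (U : X → ℝ)
    (d1 δ1 : ℝ) (hδ1 : δ1 ∈ Set.Ioo (0 : ℝ) 1)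
    (hUsup : BddAbove (U '' {x | V x ≤ d1}))
    (hUd : ∀ x, d1 < V x → U x ≤ -δ1 * V x)
    (δ : ℝ) (hδlt : δ < δ1) :
    ∃ dlow : ℝ, ∀ d, dlow ≤ d →
      (∀ x, d < V x →
        ENNReal.ofReal (Real.exp (U x)) * ∫⁻ y, ENNReal.ofReal (Real.exp (V y)) ∂(M x)
          ≤ ENNReal.ofReal (Real.exp (V x * (1 - δ))))
      ∧ (∀ x, V x ≤ d →
        ENNReal.ofReal (Real.exp (U x)) * ∫⁻ y, ENNReal.ofReal (Real.exp (V y)) ∂(M x)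
          ≤ ENNReal.ofReal (Real.exp (d + sSup (U '' {z | V z ≤ d}) + Real.log nM)))
      ∧ (∀ x,
        ENNReal.ofReal (Real.exp (U x)) * ∫⁻ y, ENNReal.ofReal (Real.exp (V y)) ∂(M x)
          ≤ ENNReal.ofReal (Real.exp (V x * (1 - δ)
              + (d + sSup (U '' {z | V z ≤ d}) + Real.log nM)
                * Set.indicator {z | V z ≤ d} (fun _ => (1 : ℝ)) x))) := by
  obtain ⟨hδ1pos, hδ1lt⟩ := hδ1
  have hnM0 : 0 < nM := one_pos.trans_le hnM
  have hUbdd : BddAbove (range U) := bddAbove_range_of_bddAbove_sublevel hUsup fun x hx =>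
    (hUd x hx).trans (by nlinarith [hV1 x])
  refine ⟨max d1 (log nM / (δ1 - δ)), fun d hd => ?_⟩
  have hout : ∀ x, d < V x →
      ENNReal.ofReal (exp (U x)) * ∫⁻ y, ENNReal.ofReal (exp (V y)) ∂(M x)
        ≤ ENNReal.ofReal (exp (V x * (1 - δ))) := fun x hx =>
    ofReal_exp_mul_le_of_add_log_add_le hnM0 (hMv x) <|
      add_log_add_le_mul_one_sub hδlt (le_of_max_le_right hd)
        hx.le (hUd x ((le_of_max_le_left hd).trans_lt hx))
  have hin : ∀ x, V x ≤ d →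
      ENNReal.ofReal (exp (U x)) * ∫⁻ y, ENNReal.ofReal (exp (V y)) ∂(M x)
        ≤ ENNReal.ofReal (exp (d + sSup (U '' {z | V z ≤ d}) + log nM)) := fun x hx =>
    ofReal_exp_mul_le_of_add_log_add_le hnM0 (hMv x) <| by
      have hUx := le_csSup (hUbdd.mono (image_subset_range U {z | V z ≤ d})) (mem_image_of_mem U hx)
      linarith
  refine ⟨hout, hin, fun x => le_ofReal_exp_add_mul_indicator ?_ (hin x)
    fun hx => hout x (not_le.mp hx)⟩
  nlinarith [hV1 x]

/-- Suppose `|||M|||_v ≤ nM < ∞` and `U` satisfies: `U` bounded below on each `C_d`;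
`U` bounded above on `C_{d_1}`; and `U(x)/V(x) ≤ −δ_1` for `x` outside `C_{d_1}`, for
some `δ_1 ∈ (0,1)`. Then for any `δ ∈ (0,δ_1)` there exists `d̲` such that for all
`d ≥ d̲` the kernel `Q = e^U·M` satisfies `1_{C_d^c}·Q(e^V) ≤ e^{V(1−δ)}` and
`1_{C_d}·Q(e^V) ≤ exp(d + sup_{C_d} U + log|||M|||_v)`; hence `Q` satisfies the
multiplicative drift `Q(e^V) ≤ e^{V(1−δ)+b_d·1_{C_d}}` with
`b_d = d + sup_{C_d} U + log|||M|||_v`. -/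
theorem mult_drift_from_decaying_potential
    {X : Type*} [MeasurableSpace X] (M : X → Measure X)
    (V : X → ℝ) (hV1 : ∀ x, 1 ≤ V x) (hVunb : ∀ r : ℝ, ∃ x, r < V x)
    (nM : ℝ) (hnM : 1 ≤ nM)
    (hMv : ∀ x, ∫⁻ y, ENNReal.ofReal (Real.exp (V y)) ∂(M x)
      ≤ ENNReal.ofReal (nM * Real.exp (V x)))
    (U : X → ℝ)
    (hUinf : ∀ d : ℝ, ∃ m : ℝ, ∀ x, V x ≤ d → m ≤ U x)
    (d1 δ1 : ℝ) (hδ1 : δ1 ∈ Set.Ioo (0 : ℝ) 1)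
    (hUsup : BddAbove (U '' {x | V x ≤ d1}))
    (hUd : ∀ x, d1 < V x → U x ≤ -δ1 * V x)
    (δ : ℝ) (hδpos : 0 < δ) (hδlt : δ < δ1) :
    ∃ dlow : ℝ, ∀ d, dlow ≤ d →
      (∀ x, d < V x →
        ENNReal.ofReal (Real.exp (U x)) * ∫⁻ y, ENNReal.ofReal (Real.exp (V y)) ∂(M x)
          ≤ ENNReal.ofReal (Real.exp (V x * (1 - δ))))
      ∧ (∀ x, V x ≤ d →
        ENNReal.ofReal (Real.exp (U x)) * ∫⁻ y, ENNReal.ofReal (Real.exp (V y)) ∂(M x)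
          ≤ ENNReal.ofReal (Real.exp (d + sSup (U '' {z | V z ≤ d}) + Real.log nM)))
      ∧ (∀ x,
        ENNReal.ofReal (Real.exp (U x)) * ∫⁻ y, ENNReal.ofReal (Real.exp (V y)) ∂(M x)
          ≤ ENNReal.ofReal (Real.exp (V x * (1 - δ)
              + (d + sSup (U '' {z | V z ≤ d}) + Real.log nM)
                * Set.indicator {z | V z ≤ d} (fun _ => (1 : ℝ)) x))) :=
  mult_drift_from_decaying_potential_general M V hV1 nM hnM hMv U d1 δ1 hδ1 hUsup hUd δ hδlt
end

section
/- For the Cox-Ingersoll-Ross transition kernel M^Δ with parameters θ, μ, σ > 0, and with drift function V(x) = 1 + 4θsx/(σ²(1−e^{−θΔ})): if s ∈ (0, (1−e^{−θΔ})/2), δ ∈ (0, 1 − e^{−θΔ}/(1−2s)), and d ≥ (1 − 2θμ·log(1−2s)/σ²)/(1 − e^{−θΔ}/(1−2s) − δ), then M^Δ(e^V)(x) ≤ exp(V(x)(1−δ) + b_d·1_{C_d}(x)) for all x > 0, where b_d = d·e^{−θΔ}/(1−2s) − (2θμ/σ²)·log(1−2s) + 1. -/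
/-!
Factoring out `e`, the MGF at `s` gives `log M^Δ(e^V)(x) = r V(x) + a - r` with
`r = e^{-θΔ}/(1-2s)` and `a = 1 - (κ/2) log(1-2s)`; the lower bound on `d` is exactly
`a ≤ d (1 - r - δ)`.
-/

open MeasureTheory
open scoped ENNReal

theorem lintegral_ofReal_exp_const_add {α : Type*} [MeasurableSpace α] (ν : Measure α)
    (a : ℝ) (f : α → ℝ) :
    ∫⁻ y, ENNReal.ofReal (Real.exp (a + f y)) ∂ν
      = ENNReal.ofReal (Real.exp a) * ∫⁻ y, ENNReal.ofReal (Real.exp (f y)) ∂ν := by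
  simp_rw [Real.exp_add, ENNReal.ofReal_mul (Real.exp_pos a).le]
  exact lintegral_const_mul' _ _ ENNReal.ofReal_ne_top

/-- Off the level set `{V ≤ d}` the affine bound `r V + a - r` contracts to `V (1 - δ)`, because
`a ≤ d (1 - r - δ) < V (1 - r - δ)`; on it, the constant `d r + a` absorbs the excess. -/
theorem affine_le_mul_one_sub_add_indicator {α : Type*} {V : α → ℝ} {r δ a d : ℝ}
    (hr : 0 ≤ r) (hrδ : 0 < 1 - r - δ) (ha : a ≤ d * (1 - r - δ)) {x : α} (hVx : 0 ≤ V x) :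
    r * V x + a - r ≤ V x * (1 - δ) + (d * r + a) * {z | V z ≤ d}.indicator (fun _ => 1) x := by
  by_cases hx : V x ≤ d
  · rw [Set.indicator_of_mem (show x ∈ {z | V z ≤ d} from hx)]
    nlinarith [mul_le_mul_of_nonneg_left hx hr, mul_nonneg hVx (by linarith : 0 ≤ 1 - δ)]
  · rw [Set.indicator_of_notMem (show x ∉ {z | V z ≤ d} from hx)]
    nlinarith [mul_lt_mul_of_pos_right (lt_of_not_ge hx) hrδ]

theorem cir_mult_drift_general
    (θ μ σ Δ : ℝ) (hθ : 0 < θ)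
    (M : ℝ → Measure ℝ)
    (cΔ κ : ℝ)
    (hcΔ : cΔ = 2 * θ / (σ ^ 2 * (1 - Real.exp (-(θ * Δ)))))
    (hκ : κ = 4 * θ * μ / σ ^ 2)
    -- the moment generating function of `Z_Δ = 2c_Δ X_Δ` given `X_0 = x`:
    (hMGF : ∀ x : ℝ, 0 < x → ∀ s' : ℝ, s' < 1 / 2 →
      ∫⁻ y, ENNReal.ofReal (Real.exp (s' * (2 * cΔ * y))) ∂(M x)
        = ENNReal.ofReal (Real.exp (2 * cΔ * x * s' * (Real.exp (-(θ * Δ)) / (1 - 2 * s'))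
            - κ / 2 * Real.log (1 - 2 * s'))))
    (s δ d : ℝ)
    (hs : s ∈ Set.Ioo 0 ((1 - Real.exp (-(θ * Δ))) / 2))
    (hδ : δ ∈ Set.Ioo 0 (1 - Real.exp (-(θ * Δ)) / (1 - 2 * s)))
    (hd : (1 - 2 * θ * μ * Real.log (1 - 2 * s) / σ ^ 2)
            / (1 - Real.exp (-(θ * Δ)) / (1 - 2 * s) - δ) ≤ d) :
    ∀ x : ℝ, 0 < x →
      ∫⁻ y, ENNReal.ofReal (Real.exp (1 + 2 * cΔ * s * y)) ∂(M x)
        ≤ ENNReal.ofReal (Real.exp ((1 + 2 * cΔ * s * x) * (1 - δ)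
            + (d * (Real.exp (-(θ * Δ)) / (1 - 2 * s))
                - 2 * θ * μ / σ ^ 2 * Real.log (1 - 2 * s) + 1)
              * Set.indicator {z : ℝ | 1 + 2 * cΔ * s * z ≤ d} (fun _ => (1 : ℝ)) x)) := by
  intro x hx
  set E := Real.exp (-(θ * Δ))
  obtain ⟨hs0, hsE⟩ := hs
  have hE : 0 < E := Real.exp_pos _
  have h2s : 0 < 1 - 2 * s := by linarith
  have hr : 0 ≤ E / (1 - 2 * s) := by positivity
  have hrδ : 0 < 1 - E / (1 - 2 * s) - δ := by linarith [hδ.2]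
  have hc : 0 ≤ cΔ := hcΔ ▸ div_nonneg (by positivity) (mul_nonneg (sq_nonneg σ) (by linarith))
  have key := affine_le_mul_one_sub_add_indicator (V := fun z => 1 + 2 * cΔ * s * z) hr hrδ
    ((div_le_iff₀ hrδ).1 hd) (by positivity : 0 ≤ 1 + 2 * cΔ * s * x)
  calc ∫⁻ y, ENNReal.ofReal (Real.exp (1 + 2 * cΔ * s * y)) ∂(M x)
      = ENNReal.ofReal (Real.exp 1) * ∫⁻ y, ENNReal.ofReal (Real.exp (s * (2 * cΔ * y))) ∂(M x) := by
        rw [← lintegral_ofReal_exp_const_add]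
        exact lintegral_congr fun y => by ring_nf
    _ = ENNReal.ofReal (Real.exp (1 + (2 * cΔ * x * s * (E / (1 - 2 * s))
          - κ / 2 * Real.log (1 - 2 * s)))) := by
        rw [hMGF x hx s (by linarith), ← ENNReal.ofReal_mul (Real.exp_pos 1).le, ← Real.exp_add]
    _ ≤ _ := by
        refine ENNReal.ofReal_le_ofReal (Real.exp_le_exp.2 ?_)
        subst hκ
        convert key using 1 <;> ring

/-- For the Cox-Ingersoll-Ross transition kernel `M^Δ` with parameters `θ, μ, σ > 0`
(with `2θμ/σ² > 1`), and drift function `V(x) = 1 + 4θsx/(σ²(1−e^{−θΔ})) = 1 + 2c_Δ s x`: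
if `s ∈ (0,(1−e^{−θΔ})/2)`, `δ ∈ (0, 1 − e^{−θΔ}/(1−2s))` and
`d ≥ (1 − 2θμ·log(1−2s)/σ²)/(1 − e^{−θΔ}/(1−2s) − δ)`, then
`M^Δ(e^V)(x) ≤ exp(V(x)(1−δ) + b_d·1_{C_d}(x))` for all `x > 0`, where
`b_d = d·e^{−θΔ}/(1−2s) − (2θμ/σ²)·log(1−2s) + 1`. The MGF formula for the scaled
non-central chi-square transition is taken as a hypothesis. -/
theorem cir_mult_drift
    (θ μ σ Δ : ℝ) (hθ : 0 < θ) (hμ : 0 < μ) (hσ : 0 < σ) (hΔ : 0 < Δ)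
    (hstat : 1 < 2 * θ * μ / σ ^ 2)
    (M : ℝ → Measure ℝ)
    (cΔ κ : ℝ)
    (hcΔ : cΔ = 2 * θ / (σ ^ 2 * (1 - Real.exp (-(θ * Δ)))))
    (hκ : κ = 4 * θ * μ / σ ^ 2)
    -- the moment generating function of `Z_Δ = 2c_Δ X_Δ` given `X_0 = x`:
    (hMGF : ∀ x : ℝ, 0 < x → ∀ s' : ℝ, s' < 1 / 2 →
      ∫⁻ y, ENNReal.ofReal (Real.exp (s' * (2 * cΔ * y))) ∂(M x)
        = ENNReal.ofReal (Real.exp (2 * cΔ * x * s' * (Real.exp (-(θ * Δ)) / (1 - 2 * s'))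
            - κ / 2 * Real.log (1 - 2 * s'))))
    (s δ d : ℝ)
    (hs : s ∈ Set.Ioo 0 ((1 - Real.exp (-(θ * Δ))) / 2))
    (hδ : δ ∈ Set.Ioo 0 (1 - Real.exp (-(θ * Δ)) / (1 - 2 * s)))
    (hd : (1 - 2 * θ * μ * Real.log (1 - 2 * s) / σ ^ 2)
            / (1 - Real.exp (-(θ * Δ)) / (1 - 2 * s) - δ) ≤ d) :
    ∀ x : ℝ, 0 < x →
      ∫⁻ y, ENNReal.ofReal (Real.exp (1 + 2 * cΔ * s * y)) ∂(M x)
        ≤ ENNReal.ofReal (Real.exp ((1 + 2 * cΔ * s * x) * (1 - δ)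
            + (d * (Real.exp (-(θ * Δ)) / (1 - 2 * s))
                - 2 * θ * μ / σ ^ 2 * Real.log (1 - 2 * s) + 1)
              * Set.indicator {z : ℝ | 1 + 2 * cΔ * s * z ≤ d} (fun _ => (1 : ℝ)) x)) :=
  cir_mult_drift_general θ μ σ Δ hθ M cΔ κ hcΔ hκ hMGF s δ d hs hδ hd
end
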